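/- For the (2, n−1) bilinear form ζ·z = ζ₁z₁ + ζ₂z₂ − ζ₃z₃ − ⋯ − ζ_{n+1}z_{n+1}, let □ be the associated real quadratic form and Δ_ℂ the complexified form. If ζ = ξ + iη satisfies □(ξ) = □(η) > 1 and Δ_ℂ(ζ) = 0, then the horosphere {z : ζ·z = 1} does not meet the real hyperboloid X = {x ∈ ℝ^{n+1} : □(x) = 1}, i.e. ζ·x ≠ 1 for all x ∈ X. -/
import Mathlib


open Complex Finset

set_option maxHeartbeats 1000000

lemma aux_neg_on_complement {ι : Type*} (s : Finset ι) (qa qb qx : ι → ℝ)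
    (a0 a1 b0 b1 x0 x1 c : ℝ)
    (hc : 1 < c)
    (hQa : a0^2 + a1^2 - ∑ j ∈ s, qa j ^ 2 = c)
    (hQb : b0^2 + b1^2 - ∑ j ∈ s, qb j ^ 2 = c)
    (hab : a0*b0 + a1*b1 - ∑ j ∈ s, qa j * qb j = 0)
    (hu : a0*x0 + a1*x1 - ∑ j ∈ s, qa j * qx j = 1)
    (hv : b0*x0 + b1*x1 - ∑ j ∈ s, qb j * qx j = 0)
    (hQx : x0^2 + x1^2 - ∑ j ∈ s, qx j ^ 2 = 1) : False := by
  -- w = c • x - a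
  set w : ι → ℝ := fun j => c * qx j - qa j with hw
  set w0 : ℝ := c * x0 - a0 with hw0
  set w1 : ℝ := c * x1 - a1 with hw1
  -- q-side Gram scalars
  set G11 : ℝ := ∑ j ∈ s, qa j ^ 2 with hG11
  set G12 : ℝ := ∑ j ∈ s, qa j * qb j with hG12
  set G22 : ℝ := ∑ j ∈ s, qb j ^ 2 with hG22
  set Sax : ℝ := ∑ j ∈ s, qa j * qx j with hSax
  set Sbx : ℝ := ∑ j ∈ s, qb j * qx j with hSbx
  set Sxx : ℝ := ∑ j ∈ s, qx j ^ 2 with hSxx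
  have hG1w : ∑ j ∈ s, qa j * w j = c * Sax - G11 := by
    rw [hSax, hG11, Finset.mul_sum, ← Finset.sum_sub_distrib]
    exact Finset.sum_congr rfl fun j _ => by simp [hw]; ring
  have hG2w : ∑ j ∈ s, qb j * w j = c * Sbx - G12 := by
    rw [hSbx, hG12, Finset.mul_sum, ← Finset.sum_sub_distrib]
    exact Finset.sum_congr rfl fun j _ => by simp [hw]; ring
  have hGww : ∑ j ∈ s, w j ^ 2 = c^2 * Sxx - 2*c*Sax + G11 := by
    rw [hSxx, hSax, hG11, Finset.mul_sum, Finset.mul_sum, ← Finset.sum_sub_distrib,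
      ← Finset.sum_add_distrib]
    exact Finset.sum_congr rfl fun j _ => by simp [hw]; ring
  -- nonnegativity and Cauchy-Schwarz on q-side
  have hG11n : 0 ≤ G11 := Finset.sum_nonneg fun j _ => sq_nonneg _
  have hG22n : 0 ≤ G22 := Finset.sum_nonneg fun j _ => sq_nonneg _
  have hGwwn : 0 ≤ ∑ j ∈ s, w j ^ 2 := Finset.sum_nonneg fun j _ => sq_nonneg _
  have cs1 : G12 ^ 2 ≤ G11 * G22 := Finset.sum_mul_sq_le_sq_mul_sq s qa qb
  have hcpos : (0:ℝ) < c := by linarith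
  -- p-side scalars
  set P11 : ℝ := a0^2 + a1^2 with hP11
  set P12 : ℝ := a0*b0 + a1*b1 with hP12
  set P22 : ℝ := b0^2 + b1^2 with hP22
  set P1w : ℝ := a0*w0 + a1*w1 with hP1w
  set P2w : ℝ := b0*w0 + b1*w1 with hP2w
  set Pww : ℝ := w0^2 + w1^2 with hPww
  set D : ℝ := P11*P22 - P12^2 with hD
  set A : ℝ := P1w*P22 - P2w*P12 with hA
  set B : ℝ := P2w*P11 - P1w*P12 with hB
  clear_value w w0 w1 G11 G12 G22 Sax Sbx Sxx P11 P12 P22 P1w P2w Pww D A B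
  -- Gram relations between p and q sides
  have h1 : P11 = c + G11 := by linarith only [hQa]
  have h2 : P22 = c + G22 := by linarith only [hQb]
  have h3 : P12 = G12 := by linarith only [hab]
  have h4 : P1w = ∑ j ∈ s, qa j * w j := by
    rw [hG1w, hP1w, hw0, hw1]; linear_combination c * hu - hQa + hP11
  have h5 : P2w = ∑ j ∈ s, qb j * w j := by
    rw [hG2w, hP2w, hw0, hw1]; linear_combination c * hv - hab + hP12
  have h6 : Pww = (∑ j ∈ s, w j ^ 2) + c^2 - c := by
    rw [hGww, hPww, hw0, hw1]; linear_combination c^2 * hQx - 2*c*hu + hQa - hP11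
  -- ℝ² Gram determinant identity (rank ≤ 2)
  have I1 : A * P1w + B * P2w = D * Pww := by
    rw [hA, hB, hD, hP11, hP12, hP22, hP1w, hP2w, hPww]; ring
  have I2 : A^2*P11 + 2*A*B*P12 + B^2*P22 = D * (A*P1w + B*P2w) := by
    rw [hA, hB, hD]; ring
  rw [I1] at I2
  -- main Cauchy-Schwarz
  have cs2 : (∑ j ∈ s, (A * qa j + B * qb j) * w j) ^ 2 ≤
      (∑ j ∈ s, (A * qa j + B * qb j) ^ 2) * ∑ j ∈ s, w j ^ 2 :=
    Finset.sum_mul_sq_le_sq_mul_sq s _ w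
  have e1 : ∑ j ∈ s, (A * qa j + B * qb j) * w j = A * P1w + B * P2w := by
    rw [h4, h5, Finset.mul_sum, Finset.mul_sum, ← Finset.sum_add_distrib]
    exact Finset.sum_congr rfl fun j _ => by ring
  have e2 : ∑ j ∈ s, (A * qa j + B * qb j) ^ 2 = A^2*G11 + 2*A*B*G12 + B^2*G22 := by
    rw [hG11, hG12, hG22, Finset.mul_sum, Finset.mul_sum, Finset.mul_sum,
      ← Finset.sum_add_distrib, ← Finset.sum_add_distrib]
    exact Finset.sum_congr rfl fun j _ => by ring
  have e3 : A^2*G11 + 2*A*B*G12 + B^2*G22 = D*(D*Pww) - c*(A^2+B^2) := by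
    linear_combination I2 - A^2*h1 - 2*A*B*h3 - B^2*h2
  rw [e1, e2, e3, I1] at cs2
  -- cs2 : (D*Pww)^2 ≤ (D*(D*Pww) - c*(A^2+B^2)) * ∑ w^2
  have htG : 0 ≤ c*(A^2+B^2) * ∑ j ∈ s, w j ^ 2 :=
    mul_nonneg (mul_nonneg hcpos.le (add_nonneg (sq_nonneg A) (sq_nonneg B))) hGwwn
  have step1 : D^2*Pww^2 ≤ D^2*Pww*(∑ j ∈ s, w j ^ 2) := by
    calc D^2*Pww^2 = (D*Pww)^2 := by ring
      _ ≤ (D*(D*Pww) - c*(A^2+B^2)) * ∑ j ∈ s, w j ^ 2 := cs2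
      _ = D^2*Pww*(∑ j ∈ s, w j ^ 2) - c*(A^2+B^2) * ∑ j ∈ s, w j ^ 2 := by ring
      _ ≤ D^2*Pww*(∑ j ∈ s, w j ^ 2) := sub_le_self _ htG
  have hcc : 0 < c*(c-1) := mul_pos hcpos (by linarith only [hc])
  have hDge : c^2 ≤ D := by
    have t1 : 0 ≤ c*G11 := mul_nonneg hcpos.le hG11n
    have t2 : 0 ≤ c*G22 := mul_nonneg hcpos.le hG22n
    have hDexp : D = (c+G11)*(c+G22) - G12^2 := by rw [hD, h1, h2, h3]
    have hDexp2 : D = c^2 + c*G11 + c*G22 + (G11*G22 - G12^2) := by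
      rw [hDexp]; ring
    linarith only [hDexp2, t1, t2, cs1]
  have hDpos : 0 < D := lt_of_lt_of_le (pow_pos hcpos 2) hDge
  have hPwwpos : 0 < Pww := by
    rw [h6]; linarith only [hGwwn, hcc]
  have final : D^2*Pww*(c^2 - c) ≤ 0 := by
    have e4 : Pww - (∑ j ∈ s, w j ^ 2) = c^2 - c := by linarith only [h6]
    calc D^2*Pww*(c^2 - c) = D^2*Pww*(Pww - (∑ j ∈ s, w j ^ 2)) := by rw [e4]
      _ = D^2*Pww^2 - D^2*Pww*(∑ j ∈ s, w j ^ 2) := by ring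
      _ ≤ 0 := by linarith only [step1]
  have pos : 0 < D^2*Pww*(c^2 - c) := by
    apply mul_pos (mul_pos (pow_pos hDpos 2) hPwwpos)
    linarith only [hcc]
  linarith only [final, pos]


/-- For the `(2, n−1)` form, if `ζ = ξ + iη` is isotropic for the complexified
form with `□(ξ) = □(η) > 1`, then the horosphere `{ζ·z = 1}` does not meet the
real hyperboloid `X = {□(x) = 1}`. -/
theorem two_n_hyperboloid_horosphere_misses (n : ℕ) (hn : 2 ≤ n)
    (ζ : Fin (n + 1) → ℂ)
    (hiso : (ζ 0) ^ 2 + (ζ 1) ^ 2 -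
        ∑ j ∈ univ.filter (fun j : Fin (n + 1) => 2 ≤ (j : ℕ)), ζ j ^ 2 = 0)
    (heq : (ζ 0).re ^ 2 + (ζ 1).re ^ 2 -
          ∑ j ∈ univ.filter (fun j : Fin (n + 1) => 2 ≤ (j : ℕ)), (ζ j).re ^ 2 =
        (ζ 0).im ^ 2 + (ζ 1).im ^ 2 -
          ∑ j ∈ univ.filter (fun j : Fin (n + 1) => 2 ≤ (j : ℕ)), (ζ j).im ^ 2)
    (hgt : 1 < (ζ 0).re ^ 2 + (ζ 1).re ^ 2 -
        ∑ j ∈ univ.filter (fun j : Fin (n + 1) => 2 ≤ (j : ℕ)), (ζ j).re ^ 2) :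
    ∀ x : Fin (n + 1) → ℝ,
      (x 0) ^ 2 + (x 1) ^ 2 -
          ∑ j ∈ univ.filter (fun j : Fin (n + 1) => 2 ≤ (j : ℕ)), (x j) ^ 2 = 1 →
      ζ 0 * (x 0 : ℂ) + ζ 1 * (x 1 : ℂ) -
          ∑ j ∈ univ.filter (fun j : Fin (n + 1) => 2 ≤ (j : ℕ)),
            ζ j * (x j : ℂ) ≠ 1 := by
  intro x hx hzx
  set s : Finset (Fin (n + 1)) := univ.filter (fun j : Fin (n + 1) => 2 ≤ (j : ℕ)) with hs
  set c : ℝ := (ζ 0).re ^ 2 + (ζ 1).re ^ 2 - ∑ j ∈ s, (ζ j).re ^ 2 with hcdef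
  -- imaginary part of the isotropy condition
  have him := congrArg Complex.im hiso
  simp only [Complex.add_im, Complex.sub_im, Complex.zero_im, sq, Complex.mul_im,
    Complex.im_sum] at him
  have hsum2 : ∑ j ∈ s, ((ζ j).re * (ζ j).im + (ζ j).im * (ζ j).re)
      = 2 * ∑ j ∈ s, (ζ j).re * (ζ j).im := by
    rw [Finset.mul_sum]; exact Finset.sum_congr rfl fun j _ => by ring
  rw [hsum2] at him
  have hab : (ζ 0).re * (ζ 0).im + (ζ 1).re * (ζ 1).im -
      ∑ j ∈ s, (ζ j).re * (ζ j).im = 0 := by linarith only [him]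
  -- real and imaginary parts of the horosphere equation
  have hre := congrArg Complex.re hzx
  simp only [Complex.add_re, Complex.sub_re, Complex.mul_re, Complex.ofReal_re,
    Complex.ofReal_im, Complex.one_re, Complex.re_sum, mul_zero, sub_zero] at hre
  have him2 := congrArg Complex.im hzx
  simp only [Complex.add_im, Complex.sub_im, Complex.mul_im, Complex.ofReal_re,
    Complex.ofReal_im, Complex.one_im, Complex.im_sum, mul_zero, zero_add] at him2
  exact aux_neg_on_complement s (fun j => (ζ j).re) (fun j => (ζ j).im) x
    ((ζ 0).re) ((ζ 1).re) ((ζ 0).im) ((ζ 1).im) (x 0) (x 1) c hgt rfl heq.symm hab hre him2 hx
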